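/- Minimum distance of the generalized Reed–Muller code: if r ≤ q - 2 and F ∈ F_q[X_1, …, X_m] is a nonzero polynomial of total degree at most r, then F is nonzero at no fewer than (q - r)·q^{m-1} points of F_q^m (equivalently, F has at most r·q^{m-1} zeros in F_q^m); hence the (r,m) generalized Reed–Muller code over F_q has minimum Hamming distance at least d = (q - r)·q^{m-1}. -/

import Mathlib

/-!
By Schwartz–Zippel, a nonzero polynomial of total degree `d` in `n + 1` variables over a field
with `q` elements has at most `d * q ^ n` zeros among the `q ^ (n + 1)` points, hence at least
`(q - d) * q ^ n` non-zeros.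
-/

open MvPolynomial Finset

namespace MvPolynomial

variable {K : Type*} [Field K] [Fintype K] [DecidableEq K] {n : ℕ}

theorem card_zeros_mul_card_le {p : MvPolynomial (Fin n) K} (hp : p ≠ 0) :
    #{x : Fin n → K | eval x p = 0} * Fintype.card K ≤ p.totalDegree * Fintype.card K ^ n := by
  have hq : (0 : ℚ≥0) < Fintype.card K := by exact_mod_cast Fintype.card_pos
  have hsz := schwartz_zippel_totalDegree hp (univ : Finset K)
  rw [Fintype.piFinset_univ, card_univ, div_le_div_iff₀ (by positivity) hq] at hsz
  exact_mod_cast hsz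

theorem sub_totalDegree_mul_pow_le_card_nonzeros {p : MvPolynomial (Fin (n + 1)) K}
    (hp : p ≠ 0) :
    (Fintype.card K - p.totalDegree) * Fintype.card K ^ n ≤
      #{x : Fin (n + 1) → K | eval x p ≠ 0} := by
  have hzeros : #{x : Fin (n + 1) → K | eval x p = 0} ≤ p.totalDegree * Fintype.card K ^ n :=
    Nat.le_of_mul_le_mul_right (by rw [mul_assoc, ← pow_succ]; exact card_zeros_mul_card_le hp)
      (Fintype.card_pos (α := K))
  have hsplit := card_filter_add_card_filter_not (s := univ) fun x : Fin (n + 1) → K => eval x p = 0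
  rw [card_univ, Fintype.card_fun, Fintype.card_fin, pow_succ'] at hsplit
  rw [Nat.sub_mul]
  simp only [ne_eq]
  omega

end MvPolynomial

theorem grm_minimum_distance_general {F : Type*} [Field F] [Fintype F] {m : ℕ} (hm : 1 ≤ m)
    {r : ℕ}
    (Fpoly : MvPolynomial (Fin m) F) (hF : Fpoly ≠ 0)
    (hdeg : Fpoly.totalDegree ≤ r) :
    (Fintype.card F - r) * (Fintype.card F) ^ (m - 1) ≤
      {P : Fin m → F | MvPolynomial.eval P Fpoly ≠ 0}.ncard := by
  classical
  obtain ⟨n, rfl⟩ : ∃ n, m = n + 1 := ⟨m - 1, by omega⟩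
  rw [Nat.add_sub_cancel, ← Finset.coe_filter_univ, Set.ncard_coe_finset]
  calc (Fintype.card F - r) * Fintype.card F ^ n
      ≤ (Fintype.card F - Fpoly.totalDegree) * Fintype.card F ^ n := by gcongr
    _ ≤ _ := sub_totalDegree_mul_pow_le_card_nonzeros hF

/-- Minimum distance of the generalized Reed–Muller code: a nonzero polynomial of total
degree at most `r ≤ q - 2` is nonzero at at least `(q - r) * q^(m-1)` points of `F_q^m`;
equivalently, the `(r, m)` generalized Reed–Muller code has minimum Hamming distance at
least `(q - r) * q^(m-1)`. -/
theorem grm_minimum_distance {F : Type*} [Field F] [Fintype F] {m : ℕ} (hm : 1 ≤ m)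
    {r : ℕ} (hr : r ≤ Fintype.card F - 2)
    (Fpoly : MvPolynomial (Fin m) F) (hF : Fpoly ≠ 0)
    (hdeg : Fpoly.totalDegree ≤ r) :
    (Fintype.card F - r) * (Fintype.card F) ^ (m - 1) ≤
      {P : Fin m → F | MvPolynomial.eval P Fpoly ≠ 0}.ncard :=
  grm_minimum_distance_general hm Fpoly hF hdeg
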